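/- arXiv:1910.11522 — 5 statements merged into one kernel-verified Lean document; each statement's English description precedes it below -/
import Mathlib

section
/- Let (S_1,...,S_ℓ) be an ordered set partition of {1,...,n} and let x ∈ R^n satisfy Σ x_i = 0. If for two indices i < j the linear forms L_i(x) and L_j(x) are equal, where L_p(x) = x_{S_{p+1}} + 2x_{S_{p+2}} + ⋯ + (ℓ-1)x_{S_{p-1}} (cyclic block indices), then x_{S_i ∪ S_{i+1} ∪ ⋯ ∪ S_{j-1}} = 0. -/
/-!
Writing `y_r = x_{S_r}`, the form `L_p` is `∑ r, ((r - p) mod ℓ) · y_r`. Passing from `p = i` to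
`p = j` lowers every cyclic distance by `j - i`, except that the distances of the blocks
`r ∈ [i, j)` wrap around and grow by `ℓ - (j - i)`. Hence
`L_i - L_j = (j - i) · ∑ r, y_r - ℓ · ∑ r ∈ [i, j), y_r`, and `∑ r, y_r = ∑ x = 0`.
-/

open Fin.NatCast

theorem Finset.sum_sum_eq_sum_of_partition {ι κ M : Type*} [Fintype ι] [Fintype κ]
    [DecidableEq ι] [AddCommMonoid M] (S : κ → Finset ι)
    (hdisj : ∀ p q, p ≠ q → Disjoint (S p) (S q)) (hcover : ∀ m, ∃ p, m ∈ S p) (f : ι → M) :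
    ∑ p, ∑ t ∈ S p, f t = ∑ t, f t := by
  rw [← Finset.sum_biUnion fun p _ q _ hpq => hdisj p q hpq]
  congr
  ext m
  simpa using hcover m

theorem Fin.val_sub_add_val_sub {ℓ : ℕ} {i j : Fin ℓ} (hij : i ≤ j) (r : Fin ℓ) :
    (r - j).val + (j - i).val = (r - i).val + if r ∈ Finset.Ico i j then ℓ else 0 := by
  have hji := Fin.coe_sub_iff_le.mpr hij
  rcases lt_or_ge r i with hri | hir
  · have hi := Fin.coe_sub_iff_lt.mpr hri
    have hj := Fin.coe_sub_iff_lt.mpr (hri.trans_le hij)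
    rw [if_neg fun h => (Finset.mem_Ico.mp h).1.not_gt hri]
    omega
  · have hi := Fin.coe_sub_iff_le.mpr hir
    rcases lt_or_ge r j with hrj | hjr
    · have hj := Fin.coe_sub_iff_lt.mpr hrj
      rw [if_pos (Finset.mem_Ico.mpr ⟨hir, hrj⟩)]
      omega
    · have hj := Fin.coe_sub_iff_le.mpr hjr
      rw [if_neg fun h => (Finset.mem_Ico.mp h).2.not_ge hjr]
      omega

section CyclicMoment

variable {R : Type*} {ℓ : ℕ}

def cyclicMoment [Semiring R] (y : Fin ℓ → R) (p : Fin ℓ) : R :=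
  ∑ r, ((r - p).val : R) * y r

theorem sum_Icc_natCast_mul_eq_cyclicMoment [Semiring R] [NeZero ℓ] (y : Fin ℓ → R)
    (p : Fin ℓ) :
    ∑ q ∈ Finset.Icc 1 (ℓ - 1), (q : R) * y (p + (q : Fin ℓ)) = cyclicMoment y p := by
  have hIco : Finset.Ico 1 ℓ = Finset.Icc 1 (ℓ - 1) := by
    rw [← Finset.Ico_add_one_right_eq_Icc, Nat.sub_add_cancel NeZero.one_le]
  calc ∑ q ∈ Finset.Icc 1 (ℓ - 1), (q : R) * y (p + (q : Fin ℓ))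
      = ∑ q ∈ Finset.range ℓ, (q : R) * y (p + (q : Fin ℓ)) := by
        rw [Finset.sum_range_eq_add_Ico _ (Nat.pos_of_neZero ℓ), hIco]
        simp
    _ = ∑ q : Fin ℓ, (q.val : R) * y (p + q) := by
        simp only [← Fin.sum_univ_eq_sum_range, Fin.cast_val_eq_self]
    _ = cyclicMoment y p :=
        Fintype.sum_equiv (Equiv.addLeft p) _ _ fun q => by simp

theorem cyclicMoment_sub_cyclicMoment [CommRing R] (y : Fin ℓ → R) {i j : Fin ℓ}
    (hij : i ≤ j) :
    cyclicMoment y i - cyclicMoment y j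
      = (j - i).val * ∑ r, y r - ℓ * ∑ r ∈ Finset.Ico i j, y r := by
  have hshift : cyclicMoment y j + (j - i).val * ∑ r, y r
      = cyclicMoment y i + ℓ * ∑ r ∈ Finset.Ico i j, y r := by
    calc cyclicMoment y j + (j - i).val * ∑ r, y r
        = ∑ r, (((r - j).val + (j - i).val : ℕ) : R) * y r := by
          simp only [cyclicMoment, Finset.mul_sum, ← Finset.sum_add_distrib]
          push_cast
          simp only [add_mul]
      _ = ∑ r, (((r - i).val : R) * y r + if r ∈ Finset.Ico i j then ℓ * y r else 0) := by
          simp only [Fin.val_sub_add_val_sub hij]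
          push_cast
          simp only [add_mul, ite_mul, zero_mul]
      _ = cyclicMoment y i + ℓ * ∑ r ∈ Finset.Ico i j, y r := by
          rw [Finset.sum_add_distrib, Finset.sum_ite_mem, Finset.univ_inter, Finset.mul_sum,
            cyclicMoment]
  linear_combination -hshift

end CyclicMoment

theorem stmt3 (n ℓ : ℕ) [NeZero ℓ]
    (S : Fin ℓ → Finset (Fin n))
    (hdisj : ∀ p q : Fin ℓ, p ≠ q → Disjoint (S p) (S q))
    (hcover : ∀ m : Fin n, ∃ p : Fin ℓ, m ∈ S p)
    (x : Fin n → ℝ) (hx : ∑ i, x i = 0)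
    (L : Fin ℓ → ℝ)
    (hL : ∀ p : Fin ℓ,
      L p = ∑ q ∈ Finset.Icc 1 (ℓ - 1), (q : ℝ) * ∑ t ∈ S (p + (q : Fin ℓ)), x t)
    (i j : Fin ℓ) (hij : i < j) (heq : L i = L j) :
    ∑ p ∈ Finset.Ico i j, ∑ t ∈ S p, x t = 0 := by
  set y : Fin ℓ → ℝ := fun p => ∑ t ∈ S p, x t
  have hy : ∑ p, y p = 0 := (Finset.sum_sum_eq_sum_of_partition S hdisj hcover x).trans hx
  have hLy : ∀ p, L p = cyclicMoment y p :=
    fun p => (hL p).trans (sum_Icc_natCast_mul_eq_cyclicMoment y p)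
  have key := cyclicMoment_sub_cyclicMoment y hij.le
  rw [← hLy, ← hLy, heq, sub_self, hy, mul_zero, zero_sub, zero_eq_neg] at key
  exact (mul_eq_zero.mp key).resolve_left (Nat.cast_ne_zero.mpr (NeZero.ne ℓ))
end

section
/- Let (S_1,...,S_ℓ) be an ordered set partition of {1,...,n}, x ∈ R^n with Σ x_i = 0, and suppose the minimum of L_1(x),...,L_ℓ(x) is attained at both indices i and j with i < j. Then for every p with i ≤ p ≤ j-1, one has x_{S_i ∪ S_{i+1} ∪ ⋯ ∪ S_{p-1}} ≥ 0 (with the convention that the empty union gives 0). -/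
/-!
Write `y q` for the block sum `x_{S_q}`, so that `L p = ∑ s, ((s - p) mod ℓ) * y s`. Moving the
base point from `i` to a later `p` lowers the cyclic distance of every block by `p - i`, except
for the blocks `S_i, …, S_{p-1}`, which wrap around and gain `ℓ`. Since `∑ y = 0`, this gives
`L p - L i = ℓ * x_{S_i ∪ ⋯ ∪ S_{p-1}}`, and the left side is nonnegative by minimality of `L i`.
-/

open Finset

theorem Finset.sum_sum_eq_sum_of_pairwise_disjoint_of_cover {ι α M : Type*} [Fintype ι]
    [Fintype α] [DecidableEq α] [AddCommMonoid M] (S : ι → Finset α)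
    (hdisj : ∀ p q, p ≠ q → Disjoint (S p) (S q)) (hcover : ∀ a, ∃ p, a ∈ S p) (f : α → M) :
    ∑ p, ∑ a ∈ S p, f a = ∑ a, f a := by
  have hunion : univ.biUnion S = univ :=
    eq_univ_iff_forall.mpr fun a ↦ let ⟨p, hp⟩ := hcover a; mem_biUnion.mpr ⟨p, mem_univ _, hp⟩
  rw [← sum_biUnion fun p _ q _ hpq ↦ hdisj p q hpq, hunion]

theorem Fin.cast_val_sub {R : Type*} [Ring R] {ℓ : ℕ} (a b : Fin ℓ) :
    (((a - b : Fin ℓ) : ℕ) : R) = a - b + if b ≤ a then 0 else (ℓ : R) := by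
  have h := congrArg (Int.cast : ℤ → R) (Fin.intCast_val_sub_eq_sub_add_ite a b)
  push_cast at h
  exact h

namespace Fin

variable {R : Type*} {ℓ : ℕ}

/-- With `y q = x_{S_q}` this is the paper's `L_r`. -/
def cyclicMoment [Semiring R] (y : Fin ℓ → R) (r : Fin ℓ) : R :=
  ∑ s, (((s - r : Fin ℓ) : ℕ) : R) * y s

theorem cyclicMoment_eq_sum_Icc [Semiring R] [NeZero ℓ] (y : Fin ℓ → R) (r : Fin ℓ) :
    cyclicMoment y r = ∑ q ∈ Icc 1 (ℓ - 1), (q : R) * y (r + Fin.ofNat ℓ q) := by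
  have hrange : ∑ q ∈ range ℓ, (q : R) * y (r + Fin.ofNat ℓ q)
      = ∑ q ∈ Icc 1 (ℓ - 1), (q : R) * y (r + Fin.ofNat ℓ q) := by
    rw [sum_range_eq_add_Ico _ (Nat.pos_of_neZero ℓ), Nat.cast_zero, zero_mul, zero_add,
      Icc_sub_one_right_eq_Ico_of_not_isMin (by simpa using NeZero.ne ℓ) 1]
  rw [← hrange, ← Fin.sum_univ_eq_sum_range (fun q ↦ (q : R) * y (r + Fin.ofNat ℓ q))]
  simp only [Fin.ofNat_val_eq_self]
  rw [cyclicMoment, ← Equiv.sum_comp (Equiv.addLeft r)]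
  simp only [Equiv.coe_addLeft, add_sub_cancel_left]

theorem cyclicMoment_sub_cyclicMoment_of_le [CommRing R] (y : Fin ℓ → R) {i p : Fin ℓ}
    (hip : i ≤ p) :
    cyclicMoment y p - cyclicMoment y i
      = ((i : R) - p) * ∑ s, y s + ℓ * ∑ s ∈ Ico i p, y s := by
  have hterm : ∀ s : Fin ℓ,
      (((s - p : Fin ℓ) : ℕ) : R) * y s - (((s - i : Fin ℓ) : ℕ) : R) * y s
        = ((i : R) - p) * y s + if s ∈ Ico i p then ℓ * y s else 0 := by
    intro s
    rw [cast_val_sub, cast_val_sub]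
    by_cases hps : p ≤ s
    · rw [if_pos hps, if_pos (hip.trans hps), if_neg fun h ↦ (not_lt.mpr hps) (mem_Ico.mp h).2]
      ring
    by_cases his : i ≤ s
    · rw [if_neg hps, if_pos his, if_pos (mem_Ico.mpr ⟨his, not_le.mp hps⟩)]
      ring
    · rw [if_neg hps, if_neg his, if_neg fun h ↦ his (mem_Ico.mp h).1]
      ring
  rw [cyclicMoment, cyclicMoment, ← sum_sub_distrib, sum_congr rfl fun s _ ↦ hterm s,
    sum_add_distrib, sum_ite_mem, univ_inter, ← mul_sum, ← mul_sum]

end Fin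

theorem stmt4_general (n ℓ : ℕ) [NeZero ℓ]
    (S : Fin ℓ → Finset (Fin n))
    (hdisj : ∀ p q : Fin ℓ, p ≠ q → Disjoint (S p) (S q))
    (hcover : ∀ m : Fin n, ∃ p : Fin ℓ, m ∈ S p)
    (x : Fin n → ℝ) (hx : ∑ i, x i = 0)
    (L : Fin ℓ → ℝ)
    (hL : ∀ p : Fin ℓ,
      L p = ∑ q ∈ Finset.Icc 1 (ℓ - 1), (q : ℝ) * ∑ t ∈ S (p + (Fin.ofNat ℓ q : Fin ℓ)), x t)
    (i j : Fin ℓ)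
    (hmin : ∀ p : Fin ℓ, L i ≤ L p) :
    ∀ p : Fin ℓ, i ≤ p → p < j → 0 ≤ ∑ q ∈ Finset.Ico i p, ∑ t ∈ S q, x t := by
  intro p hip _
  set y : Fin ℓ → ℝ := fun q ↦ ∑ t ∈ S q, x t
  have hL' : ∀ r, L r = Fin.cyclicMoment y r := fun r ↦
    (hL r).trans (Fin.cyclicMoment_eq_sum_Icc y r).symm
  have htotal : ∑ q, y q = 0 := by
    rw [Finset.sum_sum_eq_sum_of_pairwise_disjoint_of_cover S hdisj hcover, hx]
  have hdiff : L p - L i = ℓ * ∑ q ∈ Ico i p, y q := by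
    rw [hL', hL', Fin.cyclicMoment_sub_cyclicMoment_of_le y hip, htotal, mul_zero, zero_add]
  have hℓ : (0 : ℝ) < ℓ := Nat.cast_pos.mpr (Nat.pos_of_neZero ℓ)
  exact nonneg_of_mul_nonneg_right (hdiff ▸ sub_nonneg.mpr (hmin p)) hℓ

theorem stmt4 (n ℓ : ℕ) [NeZero ℓ]
    (S : Fin ℓ → Finset (Fin n))
    (hdisj : ∀ p q : Fin ℓ, p ≠ q → Disjoint (S p) (S q))
    (hcover : ∀ m : Fin n, ∃ p : Fin ℓ, m ∈ S p)
    (x : Fin n → ℝ) (hx : ∑ i, x i = 0)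
    (L : Fin ℓ → ℝ)
    (hL : ∀ p : Fin ℓ,
      L p = ∑ q ∈ Finset.Icc 1 (ℓ - 1), (q : ℝ) * ∑ t ∈ S (p + (Fin.ofNat ℓ q : Fin ℓ)), x t)
    (i j : Fin ℓ) (hij : i < j) (heq : L i = L j)
    (hmin : ∀ p : Fin ℓ, L i ≤ L p) :
    ∀ p : Fin ℓ, i ≤ p → p < j → 0 ≤ ∑ q ∈ Finset.Ico i p, ∑ t ∈ S q, x t :=
  stmt4_general n ℓ S hdisj hcover x hx L hL i j hmin
end

section
/- Let I = {i_1, i_2} with i_1 < i_2 be a 2-element subset of {1,...,n} that is not a cyclic interval. Then the hyperplane x_{i_1+1} + x_{i_1+2} + ⋯ + x_{i_2} = 1 (sum over the cyclic interval from i_1+1 to i_2) intersects the interior of Δ_{2,n}, and splits Δ_{2,n} into the two full-dimensional polytopes {x ∈ Δ_{2,n} : x_S ≥ 1} and {x ∈ Δ_{2,n} : x_{S^c} ≥ 1} where S = {i_1+1,...,i_2}, which intersect exactly in the hyperplane slice. -/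
/-!
The sum of `x_S` and `x_{Sᶜ}` is `2` on `Δ_{2,n}`, so the two half-spaces `x_S ≥ 1` and
`x_{Sᶜ} ≥ 1` cover `Δ_{2,n}` and meet exactly on the slice `x_S = 1`. Since `I` is not a cyclic
interval, both `S` and `Sᶜ` have at least two elements, so any split `2 = a + b` with
`0 < a, b < 2` is realised by an interior point that is constant on `S` and on `Sᶜ`.
-/

/-- The cyclic interval `(a+1, ..., b)` in `Fin n`. -/
def cycIoc (n : ℕ) (a b : Fin n) : Finset (Fin n) :=
  Finset.univ.filter (fun x => x ≠ a ∧ (x - a).val ≤ (b - a).val)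

open Finset

lemma cycIoc_eq_Ioc {n : ℕ} {a b : Fin n} (hab : a ≤ b) : cycIoc n a b = Ioc a b := by
  ext x
  simp only [cycIoc, mem_filter, mem_univ, true_and, mem_Ioc, Fin.coe_sub_iff_le.mpr hab]
  rcases le_or_gt a x with hax | hxa
  · rw [Fin.coe_sub_iff_le.mpr hax, Fin.le_def, Ne, Fin.ext_iff, Fin.lt_def]
    omega
  · rw [Fin.coe_sub_iff_lt.mpr hxa]
    have := b.isLt
    constructor
    · rintro ⟨-, h⟩
      rw [Fin.lt_def] at hxa
      omega
    · rintro ⟨h, -⟩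
      exact (lt_asymm h hxa).elim

lemma card_cycIoc {n : ℕ} {a b : Fin n} (hab : a ≤ b) : #(cycIoc n a b) = b - a := by
  rw [cycIoc_eq_Ioc hab, Fin.card_Ioc]

lemma two_le_card_cycIoc {n : ℕ} [NeZero n] {a b : Fin n} (hab : a < b)
    (hsep : a + 1 ≠ b ∧ b + 1 ≠ a) :
    2 ≤ #(cycIoc n a b) ∧ 2 ≤ #(cycIoc n a b)ᶜ := by
  rw [card_compl, Fintype.card_fin, card_cycIoc hab.le]
  obtain ⟨hab1, hba1⟩ := hsep
  simp only [Ne, Fin.ext_iff, Fin.val_add, Fin.val_one'] at hab1 hba1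
  have hab' : a.val < b.val := hab
  have hb := b.isLt
  have h1 : 1 % n = 1 := Nat.mod_eq_of_lt (by omega)
  rw [h1] at hab1 hba1
  constructor
  · rw [Nat.mod_eq_of_lt (by omega)] at hab1
    omega
  · by_contra!
    have hb_last : b.val + 1 = n := by omega
    rw [hb_last, Nat.mod_self] at hba1
    omega

/-- The hypersimplex `Δ_{k,n}` with `n = card ι`. -/
def hypersimplex (ι : Type*) [Fintype ι] (k : ℝ) : Set (ι → ℝ) :=
  {x | (∀ m, 0 ≤ x m ∧ x m ≤ 1) ∧ ∑ m, x m = k}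

section Hypersimplex

variable {ι : Type*} [Fintype ι] [DecidableEq ι]

lemma sum_add_sum_compl_of_mem_hypersimplex (S : Finset ι) {k : ℝ} {x : ι → ℝ}
    (hx : x ∈ hypersimplex ι k) : ∑ t ∈ S, x t + ∑ t ∈ Sᶜ, x t = k :=
  (sum_add_sum_compl S x).trans hx.2

lemma exists_interior_hypersimplex (S : Finset ι) {a b k : ℝ}
    (ha : 0 < a) (haS : a < #S) (hb : 0 < b) (hbS : b < #Sᶜ) (hk : a + b = k) :
    ∃ x ∈ hypersimplex ι k, (∀ m, 0 < x m ∧ x m < 1) ∧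
      ∑ t ∈ S, x t = a ∧ ∑ t ∈ Sᶜ, x t = b := by
  have hS : (0 : ℝ) < #S := ha.trans haS
  have hSc : (0 : ℝ) < #Sᶜ := hb.trans hbS
  -- spread `a` evenly over `S` and `b` evenly over `Sᶜ`
  set x := S.piecewise (fun _ ↦ a / #S) (fun _ ↦ b / #Sᶜ) with hx_def
  have hxS : ∑ t ∈ S, x t = a := by
    rw [hx_def, sum_congr (g := fun _ ↦ a / #S) rfl fun t ht ↦ S.piecewise_eq_of_mem _ _ ht, sum_const, nsmul_eq_mul]
    field_simp
  have hxSc : ∑ t ∈ Sᶜ, x t = b := by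
    rw [hx_def, sum_congr (g := fun _ ↦ b / #Sᶜ) rfl fun t ht ↦ S.piecewise_eq_of_notMem _ _ (mem_compl.mp ht), sum_const,
      nsmul_eq_mul]
    field_simp
  have hx : ∀ m, 0 < x m ∧ x m < 1 := by
    intro m
    by_cases hm : m ∈ S
    · rw [hx_def, S.piecewise_eq_of_mem _ _ hm, div_lt_one hS]
      exact ⟨by positivity, haS⟩
    · rw [hx_def, S.piecewise_eq_of_notMem _ _ hm, div_lt_one hSc]
      exact ⟨by positivity, hbS⟩
  refine ⟨x, ⟨fun m ↦ ⟨(hx m).1.le, (hx m).2.le⟩, ?_⟩, hx, hxS, hxSc⟩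
  rw [← sum_add_sum_compl S x, hxS, hxSc, hk]

end Hypersimplex

section Halfspaces

variable {α : Type*} {Δ : Set α} {f g : α → ℝ} {c : ℝ}

lemma sep_union_sep_eq_of_add_eq (hfg : ∀ x ∈ Δ, f x + g x = 2 * c) :
    {x ∈ Δ | c ≤ f x} ∪ {x ∈ Δ | c ≤ g x} = Δ := by
  refine Set.Subset.antisymm (Set.union_subset (Set.sep_subset _ _) (Set.sep_subset _ _)) ?_
  intro x hx
  have := hfg x hx
  rcases le_total c (f x) with h | h
  · exact Or.inl ⟨hx, h⟩
  · exact Or.inr ⟨hx, by linarith⟩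

lemma sep_inter_sep_eq_of_add_eq (hfg : ∀ x ∈ Δ, f x + g x = 2 * c) :
    {x ∈ Δ | c ≤ f x} ∩ {x ∈ Δ | c ≤ g x} = {x ∈ Δ | f x = c} := by
  ext x
  constructor
  · rintro ⟨⟨hx, hf⟩, -, hg⟩
    have := hfg x hx
    exact ⟨hx, by linarith⟩
  · rintro ⟨hx, hf⟩
    have := hfg x hx
    exact ⟨⟨hx, hf.ge⟩, hx, by linarith⟩

end Halfspaces

theorem stmt14_general (n : ℕ) [NeZero n] (i1 i2 : Fin n) (h12 : i1 < i2)
    (hnotint : i1 + 1 ≠ i2 ∧ i2 + 1 ≠ i1) :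
    let Δ : Set (Fin n → ℝ) := {x | (∀ m, 0 ≤ x m ∧ x m ≤ 1) ∧ ∑ m, x m = 2}
    let S : Finset (Fin n) := cycIoc n i1 i2
    (∃ x ∈ Δ, (∀ m, 0 < x m ∧ x m < 1) ∧ ∑ t ∈ S, x t = 1) ∧
    ({x ∈ Δ | 1 ≤ ∑ t ∈ S, x t} ∪ {x ∈ Δ | 1 ≤ ∑ t ∈ Sᶜ, x t} = Δ) ∧
    ({x ∈ Δ | 1 ≤ ∑ t ∈ S, x t} ∩ {x ∈ Δ | 1 ≤ ∑ t ∈ Sᶜ, x t}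
        = {x ∈ Δ | ∑ t ∈ S, x t = 1}) ∧
    (∃ x ∈ Δ, (∀ m, 0 < x m ∧ x m < 1) ∧ 1 < ∑ t ∈ S, x t) ∧
    (∃ x ∈ Δ, (∀ m, 0 < x m ∧ x m < 1) ∧ 1 < ∑ t ∈ Sᶜ, x t) := by
  intro Δ S
  obtain ⟨hS, hSc⟩ := two_le_card_cycIoc h12 hnotint
  have hSR : (2 : ℝ) ≤ #S := by exact_mod_cast hS
  have hScR : (2 : ℝ) ≤ #Sᶜ := by exact_mod_cast hSc
  have hsplit : ∀ x ∈ Δ, ∑ t ∈ S, x t + ∑ t ∈ Sᶜ, x t = 2 * 1 := fun x hx ↦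
    (sum_add_sum_compl_of_mem_hypersimplex S hx).trans (mul_one 2).symm
  refine ⟨?_, sep_union_sep_eq_of_add_eq hsplit, sep_inter_sep_eq_of_add_eq hsplit, ?_, ?_⟩
  · obtain ⟨x, hx, hint, hxS, -⟩ :=
      exists_interior_hypersimplex S one_pos (by linarith) one_pos (by linarith) one_add_one_eq_two
    exact ⟨x, hx, hint, hxS⟩
  · obtain ⟨x, hx, hint, hxS, -⟩ := exists_interior_hypersimplex S (a := 3 / 2) (b := 1 / 2) (k := 2)
      (by norm_num) (by linarith) (by norm_num) (by linarith) (by norm_num)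
    exact ⟨x, hx, hint, by rw [hxS]; norm_num⟩
  · obtain ⟨x, hx, hint, -, hxSc⟩ := exists_interior_hypersimplex S (a := 1 / 2) (b := 3 / 2) (k := 2)
      (by norm_num) (by linarith) (by norm_num) (by linarith) (by norm_num)
    exact ⟨x, hx, hint, by rw [hxSc]; norm_num⟩

theorem stmt14 (n : ℕ) [NeZero n] (hn : 4 ≤ n) (i1 i2 : Fin n) (h12 : i1 < i2)
    (hnotint : i1 + 1 ≠ i2 ∧ i2 + 1 ≠ i1) :
    let Δ : Set (Fin n → ℝ) := {x | (∀ m, 0 ≤ x m ∧ x m ≤ 1) ∧ ∑ m, x m = 2}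
    let S : Finset (Fin n) := cycIoc n i1 i2
    (∃ x ∈ Δ, (∀ m, 0 < x m ∧ x m < 1) ∧ ∑ t ∈ S, x t = 1) ∧
    ({x ∈ Δ | 1 ≤ ∑ t ∈ S, x t} ∪ {x ∈ Δ | 1 ≤ ∑ t ∈ Sᶜ, x t} = Δ) ∧
    ({x ∈ Δ | 1 ≤ ∑ t ∈ S, x t} ∩ {x ∈ Δ | 1 ≤ ∑ t ∈ Sᶜ, x t}
        = {x ∈ Δ | ∑ t ∈ S, x t = 1}) ∧
    (∃ x ∈ Δ, (∀ m, 0 < x m ∧ x m < 1) ∧ 1 < ∑ t ∈ S, x t) ∧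
    (∃ x ∈ Δ, (∀ m, 0 < x m ∧ x m < 1) ∧ 1 < ∑ t ∈ Sᶜ, x t) :=
  stmt14_general n i1 i2 h12 hnotint
end

section
/- If {I_1, I_2} ⊆ binom([n],k) is not weakly separated, witnessed by g_1, g_2 ∈ I_1∖I_2 and h_1, h_2 ∈ I_2∖I_1 in cyclic order g_1 < h_1 < g_2 < h_2, then there exists j ∈ {1,...,n} such that the derived pair {I_1', I_2'} ⊆ binom([n]∖{j}, k-1) is also not weakly separated, where I_p' is obtained from I_p by deleting j if j ∈ I_p and otherwise deleting the cyclically next element of I_p after j, provided k ≥ 3. -/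
/-- Weak separation with respect to the standard cyclic order. -/
def WeaklySeparated (n : ℕ) (I J : Finset (Fin n)) : Prop :=
  ¬ ∃ a b c d : Fin n, a < b ∧ b < c ∧ c < d ∧
    ((a ∈ I ∧ a ∉ J ∧ c ∈ I ∧ c ∉ J ∧ b ∈ J ∧ b ∉ I ∧ d ∈ J ∧ d ∉ I) ∨
     (a ∈ J ∧ a ∉ I ∧ c ∈ J ∧ c ∉ I ∧ b ∈ I ∧ b ∉ J ∧ d ∈ I ∧ d ∉ J))

/-- The cyclically next element of `I` after `j`. -/
def nextOf (n : ℕ) [NeZero n] (I : Finset (Fin n)) (j : Fin n) : Fin n :=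
  if h : (I.image (fun q => q - j)).Nonempty then (I.image (fun q => q - j)).min' h + j
  else j

/-- The derived subset: delete `j` from `I` if `j ∈ I`, otherwise delete the
cyclically next element of `I` after `j`. -/
def derived (n : ℕ) [NeZero n] (I : Finset (Fin n)) (j : Fin n) : Finset (Fin n) :=
  if j ∈ I then I.erase j else I.erase (nextOf n I j)

/-!
Call `(a, b, c, d)` interlaced for `(P, Q)` when `a, c ∈ P \ Q`, `b, d ∈ Q \ P` and `a, b, c, d`
lie in this cyclic order; this is exactly a witness against weak separation. Since
`derived P j = P.erase (nextOf P j)`, an interlaced quadruple survives the passage to the derived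
pair as soon as neither erased element belongs to it.

If `P` and `Q` meet, any common `j` erases itself from both sets. Otherwise pick
`p ∈ P \ {a, c}` and `q ∈ Q \ {b, d}`; after rotating the quadruple and possibly exchanging the
roles of `a` and `p` we may assume that `p` lies strictly between `a` and `b`. If `q` lies on the
arc from `c` to `a`, then `a` comes before `p` and `c` when walking from `q`, so `j = q` erases
neither and `(p, b, c, d)` survives. Otherwise `j = a` erases `a` and the first element `e` of `Q`
after `a`: the quadruple `(p, b, c, d)` survives unless `e = b`, and then `q` lies between `b` and
`c`, so `(p, q, c, d)` survives.
-/

open Finset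

theorem Finset.exists_mem_ne_ne {α : Type*} [DecidableEq α] {s : Finset α} (hs : 3 ≤ #s)
    (a b : α) : ∃ x ∈ s, x ≠ a ∧ x ≠ b := by
  obtain ⟨x, hx, hxab⟩ :=
    exists_mem_notMem_of_card_lt_card ((card_le_two (a := a) (b := b)).trans_lt hs)
  simp only [mem_insert, mem_singleton, not_or] at hxab
  exact ⟨x, hx, hxab⟩

section CircularOrder

variable {α : Type*} [CircularOrder α] {a b c q : α}

theorem sbtw_or_sbtw_of_ne (hab : a ≠ b) (hbc : b ≠ c) (hca : c ≠ a) :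
    sbtw a b c ∨ sbtw c b a := by
  by_contra! h
  rw [← btw_iff_not_sbtw, ← btw_iff_not_sbtw] at h
  rcases h.2.antisymm h.1 with h | h | h
  exacts [hab h, hbc h, hca h]

theorem sbtw_of_sbtw_of_not_sbtw (haqc : sbtw a q c) (haqb : ¬ sbtw a q b) (hqb : q ≠ b) :
    sbtw b q c := by
  have hbc : b ≠ c := by rintro rfl; exact haqb haqc
  have hqc : q ≠ c := by rintro rfl; exact sbtw_irrefl_right haqc
  refine (sbtw_or_sbtw_of_ne hqb.symm hqc hbc.symm).resolve_right fun hcqb => haqb ?_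
  exact (sbtw_trans_right hcqb.cyclic_left haqc.cyclic_left).cyclic_right

end CircularOrder

theorem Fin.sbtw_iff_sub_val {n : ℕ} {a b c : Fin n} :
    sbtw a b c ↔ 0 < (b - a).val ∧ (b - a).val < (c - a).val := by
  have sub_val (x : Fin n) : a ≤ x ∧ (x - a).val = x.val - a.val ∨
      x < a ∧ (x - a).val = n + x.val - a.val := by
    rcases le_or_gt a x with h | h
    exacts [.inl ⟨h, Fin.sub_val_of_le h⟩, .inr ⟨h, Fin.coe_sub_iff_lt.mpr h⟩]
  simp only [Fin.sbtw_iff]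
  rcases sub_val b with hb | hb <;> rcases sub_val c with hc | hc <;> omega

section Derived

variable {n : ℕ} [NeZero n] {I : Finset (Fin n)} {j x : Fin n}

theorem nextOf_mem (hI : I.Nonempty) : nextOf n I j ∈ I := by
  have hne : (I.image (· - j)).Nonempty := hI.image _
  obtain ⟨q, hq, hqj⟩ := mem_image.1 (min'_mem _ hne)
  rw [nextOf, dif_pos hne, ← hqj, sub_add_cancel]
  exact hq

theorem nextOf_sub_val_le (hx : x ∈ I) : (nextOf n I j - j).val ≤ (x - j).val := by
  have hne : (I.image (· - j)).Nonempty := ⟨x - j, mem_image_of_mem _ hx⟩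
  rw [nextOf, dif_pos hne, add_sub_cancel_right]
  exact Fin.le_def.1 (min'_le _ _ (mem_image_of_mem _ hx))

theorem not_sbtw_nextOf (hx : x ∈ I) : ¬ sbtw j x (nextOf n I j) := by
  have := nextOf_sub_val_le (j := j) hx
  rw [Fin.sbtw_iff_sub_val]
  omega

theorem nextOf_eq_self (hj : j ∈ I) : nextOf n I j = j := by
  have := nextOf_sub_val_le (j := j) hj
  rw [sub_self, Fin.val_zero, Nat.le_zero, Fin.val_eq_zero_iff, sub_eq_zero] at this
  exact this

theorem derived_eq_erase : derived n I j = I.erase (nextOf n I j) := by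
  unfold derived
  split_ifs with hj
  · rw [nextOf_eq_self hj]
  · rfl

theorem card_derived (hI : I.Nonempty) : #(derived n I j) = #I - 1 := by
  rw [derived_eq_erase, card_erase_of_mem (nextOf_mem hI)]

theorem notMem_derived : j ∉ derived n I j := by
  rw [derived_eq_erase, mem_erase, not_and]
  intro hne hj
  exact hne (nextOf_eq_self hj).symm

theorem mem_sdiff_derived {J : Finset (Fin n)} (hx : x ∈ I \ J) (hxj : x ≠ nextOf n I j) :
    x ∈ derived n I j \ derived n J j := by
  rw [mem_sdiff] at hx ⊢
  rw [derived_eq_erase, derived_eq_erase, mem_erase, mem_erase]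
  tauto

end Derived

structure Interlaced {α : Type*} [DecidableEq α] [CircularOrder α] (P Q : Finset α)
    (a b c d : α) : Prop where
  a_mem : a ∈ P \ Q
  b_mem : b ∈ Q \ P
  c_mem : c ∈ P \ Q
  d_mem : d ∈ Q \ P
  sbtw_abc : sbtw a b c
  sbtw_cda : sbtw c d a

namespace Interlaced

section CircularOrder

variable {α : Type*} [DecidableEq α] [CircularOrder α] {P Q : Finset α} {a b c d p q : α}

theorem rotate (h : Interlaced P Q a b c d) : Interlaced P Q c d a b :=
  ⟨h.c_mem, h.d_mem, h.a_mem, h.b_mem, h.sbtw_cda, h.sbtw_abc⟩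

theorem b_ne_d (h : Interlaced P Q a b c d) : b ≠ d := by
  rintro rfl
  exact sbtw_asymm h.sbtw_abc h.sbtw_cda

theorem sbtw_dab (h : Interlaced P Q a b c d) : sbtw d a b :=
  (sbtw_trans_right h.sbtw_abc h.sbtw_cda.cyclic_right).cyclic_right

theorem replace_a (h : Interlaced P Q a b c d) (hp : p ∈ P \ Q) (hdpb : sbtw d p b) :
    Interlaced P Q p b c d := by
  have hdbc : sbtw d b c := (sbtw_trans_right h.sbtw_cda h.sbtw_abc.cyclic_right).cyclic_left
  refine ⟨hp, h.b_mem, h.c_mem, h.d_mem, ?_, (sbtw_trans_right hdpb hdbc).cyclic_right⟩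
  exact (sbtw_trans_right hdbc.cyclic_left hdpb.cyclic_right).cyclic_right

theorem replace_b (h : Interlaced P Q a b c d) (hq : q ∈ Q \ P) (hbqc : sbtw b q c) :
    Interlaced P Q a q c d :=
  ⟨h.a_mem, hq, h.c_mem, h.d_mem, sbtw_trans_left h.sbtw_abc hbqc, h.sbtw_cda⟩

end CircularOrder

variable {n : ℕ} {P Q : Finset (Fin n)} {a b c d p q : Fin n}

theorem not_weaklySeparated (h : Interlaced P Q a b c d) : ¬ WeaklySeparated n P Q := by
  obtain ⟨haP, haQ⟩ := mem_sdiff.1 h.a_mem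
  obtain ⟨hbQ, hbP⟩ := mem_sdiff.1 h.b_mem
  obtain ⟨hcP, hcQ⟩ := mem_sdiff.1 h.c_mem
  obtain ⟨hdQ, hdP⟩ := mem_sdiff.1 h.d_mem
  have habc := h.sbtw_abc
  have hcda := h.sbtw_cda
  rw [Fin.sbtw_iff] at habc hcda
  rw [WeaklySeparated, not_not]
  rcases habc with ⟨hab, hbc⟩ | ⟨hbc, hca⟩ | ⟨hca, hab⟩ <;>
    rcases hcda with ⟨hcd, hda⟩ | ⟨hda, hac⟩ | ⟨hac, hcd⟩
  all_goals first
    | order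
    | exact ⟨a, b, c, d, ‹_›, ‹_›, ‹_›,
        .inl ⟨haP, haQ, hcP, hcQ, hbQ, hbP, hdQ, hdP⟩⟩
    | exact ⟨b, c, d, a, ‹_›, ‹_›, ‹_›,
        .inr ⟨hbQ, hbP, hdQ, hdP, hcP, hcQ, haP, haQ⟩⟩
    | exact ⟨c, d, a, b, ‹_›, ‹_›, ‹_›,
        .inl ⟨hcP, hcQ, haP, haQ, hdQ, hdP, hbQ, hbP⟩⟩
    | exact ⟨d, a, b, c, ‹_›, ‹_›, ‹_›,
        .inr ⟨hdQ, hdP, hbQ, hbP, haP, haQ, hcP, hcQ⟩⟩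

variable [NeZero n] {j : Fin n}

theorem derived_of_nextOf_ne (h : Interlaced P Q a b c d) (ha : nextOf n P j ≠ a)
    (hc : nextOf n P j ≠ c) (hb : nextOf n Q j ≠ b) (hd : nextOf n Q j ≠ d) :
    Interlaced (derived n P j) (derived n Q j) a b c d :=
  ⟨mem_sdiff_derived h.a_mem ha.symm, mem_sdiff_derived h.b_mem hb.symm,
    mem_sdiff_derived h.c_mem hc.symm, mem_sdiff_derived h.d_mem hd.symm, h.sbtw_abc, h.sbtw_cda⟩

theorem exists_derived_not_weaklySeparated_of_sbtw (h : Interlaced P Q a b c d)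
    (hp : p ∈ P \ Q) (hapb : sbtw a p b) (hq : q ∈ Q \ P) (hqb : q ≠ b) (hqd : q ≠ d) :
    ∃ j, ¬ WeaklySeparated n (derived n P j) (derived n Q j) := by
  obtain ⟨haP, -⟩ := mem_sdiff.1 h.a_mem
  obtain ⟨hqQ, hqP⟩ := mem_sdiff.1 hq
  have hpbcd : Interlaced P Q p b c d := h.replace_a hp (sbtw_trans_left h.sbtw_dab hapb)
  have hap : a ≠ p := by rintro rfl; exact sbtw_irrefl_left hapb
  have hac : a ≠ c := by rintro rfl; exact sbtw_irrefl_left_right h.sbtw_abc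
  have hqa : q ≠ a := by rintro rfl; exact hqP haP
  have hqc : q ≠ c := by rintro rfl; exact hqP (mem_sdiff.1 h.c_mem).1
  rcases sbtw_or_sbtw_of_ne hqa.symm hqc hac.symm with haqc | hcqa
  · have hPa : nextOf n P a = a := nextOf_eq_self haP
    by_cases hQa : nextOf n Q a = b
    · have hbqc : sbtw b q c := sbtw_of_sbtw_of_not_sbtw haqc (hQa ▸ not_sbtw_nextOf hqQ) hqb
      exact ⟨a, ((hpbcd.replace_b hq hbqc).derived_of_nextOf_ne (by rwa [hPa]) (by rwa [hPa])
        (by rw [hQa]; exact hqb.symm) (by rw [hQa]; exact h.b_ne_d)).not_weaklySeparated⟩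
    · have hQa' : nextOf n Q a ≠ d := fun e =>
        not_sbtw_nextOf (mem_sdiff.1 h.b_mem).1 (e ▸ h.sbtw_dab.cyclic_left)
      exact ⟨a, (hpbcd.derived_of_nextOf_ne (by rwa [hPa]) (by rwa [hPa]) hQa
        hQa').not_weaklySeparated⟩
  · have hqap : sbtw q a p :=
      (sbtw_trans_right (sbtw_trans_right hapb h.sbtw_abc) hcqa.cyclic_right).cyclic_right
    have hPq : ¬ sbtw q a (nextOf n P q) := not_sbtw_nextOf haP
    have hQq : nextOf n Q q = q := nextOf_eq_self hqQ
    exact ⟨q, (hpbcd.derived_of_nextOf_ne (fun e => hPq (e ▸ hqap))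
      (fun e => hPq (e ▸ hcqa.cyclic_left)) (by rwa [hQq]) (by rwa [hQq])).not_weaklySeparated⟩

theorem exists_derived_not_weaklySeparated_of_sbtw_dpb (h : Interlaced P Q a b c d)
    (hp : p ∈ P \ Q) (hpa : p ≠ a) (hdpb : sbtw d p b) (hq : q ∈ Q \ P) (hqb : q ≠ b)
    (hqd : q ≠ d) : ∃ j, ¬ WeaklySeparated n (derived n P j) (derived n Q j) := by
  have hdp : d ≠ p := by rintro rfl; exact (mem_sdiff.1 hp).2 (mem_sdiff.1 h.d_mem).1
  have had : a ≠ d := by rintro rfl; exact sbtw_irrefl_right h.sbtw_cda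
  rcases sbtw_or_sbtw_of_ne hdp hpa had with hdpa | hapd
  · have hpab : sbtw p a b :=
      (sbtw_trans_right h.sbtw_dab.cyclic_left hdpa.cyclic_right).cyclic_right
    exact (h.replace_a hp hdpb).exists_derived_not_weaklySeparated_of_sbtw h.a_mem hpab hq hqb hqd
  · have hapb : sbtw a p b := (sbtw_trans_right hdpb.cyclic_left hapd.cyclic_left).cyclic_right
    exact h.exists_derived_not_weaklySeparated_of_sbtw hp hapb hq hqb hqd

theorem exists_derived_not_weaklySeparated_of_mem (h : Interlaced P Q a b c d)
    (hp : p ∈ P \ Q) (hpa : p ≠ a) (hpc : p ≠ c) (hq : q ∈ Q \ P) (hqb : q ≠ b)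
    (hqd : q ≠ d) : ∃ j, ¬ WeaklySeparated n (derived n P j) (derived n Q j) := by
  have hdp : d ≠ p := by rintro rfl; exact (mem_sdiff.1 hp).2 (mem_sdiff.1 h.d_mem).1
  have hpb : p ≠ b := by rintro rfl; exact (mem_sdiff.1 hp).2 (mem_sdiff.1 h.b_mem).1
  rcases sbtw_or_sbtw_of_ne hdp hpb h.b_ne_d with hdpb | hbpd
  · exact h.exists_derived_not_weaklySeparated_of_sbtw_dpb hp hpa hdpb hq hqb hqd
  · exact h.rotate.exists_derived_not_weaklySeparated_of_sbtw_dpb hp hpc hbpd hq hqd hqb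

theorem exists_derived_not_weaklySeparated (h : Interlaced P Q a b c d) (hP : 3 ≤ #P)
    (hQ : 3 ≤ #Q) : ∃ j, ¬ WeaklySeparated n (derived n P j) (derived n Q j) := by
  by_cases hPQ : Disjoint P Q
  · obtain ⟨p, hp, hpa, hpc⟩ := exists_mem_ne_ne hP a c
    obtain ⟨q, hq, hqb, hqd⟩ := exists_mem_ne_ne hQ b d
    exact h.exists_derived_not_weaklySeparated_of_mem
      (mem_sdiff.2 ⟨hp, disjoint_left.1 hPQ hp⟩) hpa hpc
      (mem_sdiff.2 ⟨hq, disjoint_right.1 hPQ hq⟩) hqb hqd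
  · obtain ⟨t, htP, htQ⟩ := not_disjoint_iff.1 hPQ
    have hne {x : Fin n} (hx : x ∈ P \ Q ∨ x ∈ Q \ P) : t ≠ x := by
      rintro rfl
      rcases hx with hx | hx
      exacts [(mem_sdiff.1 hx).2 htQ, (mem_sdiff.1 hx).2 htP]
    refine ⟨t, (h.derived_of_nextOf_ne ?_ ?_ ?_ ?_).not_weaklySeparated⟩
    all_goals rw [nextOf_eq_self ‹_›]
    exacts [hne (.inl h.a_mem), hne (.inl h.c_mem), hne (.inr h.b_mem), hne (.inr h.d_mem)]

end Interlaced

theorem stmt18 (n k : ℕ) [NeZero n] (hk : 3 ≤ k)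
    (I1 I2 : Finset (Fin n)) (hc1 : I1.card = k) (hc2 : I2.card = k)
    (g1 g2 h1 h2 : Fin n)
    (hg1 : g1 ∈ I1 \ I2) (hg2 : g2 ∈ I1 \ I2)
    (hh1 : h1 ∈ I2 \ I1) (hh2 : h2 ∈ I2 \ I1)
    -- cyclic order g1 < h1 < g2 < h2
    (hcyc : (h1 - g1).val < (g2 - g1).val ∧ (g2 - g1).val < (h2 - g1).val) :
    ∃ j : Fin n,
      (derived n I1 j).card = k - 1 ∧ (derived n I2 j).card = k - 1 ∧
      j ∉ derived n I1 j ∧ j ∉ derived n I2 j ∧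
      ¬ WeaklySeparated n (derived n I1 j) (derived n I2 j) := by
  have hh1g1 : 0 < (h1 - g1).val := by
    rw [Nat.pos_iff_ne_zero, ne_eq, Fin.val_eq_zero_iff, sub_eq_zero]
    rintro rfl
    exact (mem_sdiff.1 hh1).2 (mem_sdiff.1 hg1).1
  have hg1h1g2 : sbtw g1 h1 g2 := Fin.sbtw_iff_sub_val.2 ⟨hh1g1, hcyc.1⟩
  have hg1g2h2 : sbtw g1 g2 h2 := Fin.sbtw_iff_sub_val.2 ⟨hh1g1.trans hcyc.1, hcyc.2⟩
  have h : Interlaced I1 I2 g1 h1 g2 h2 := ⟨hg1, hh1, hg2, hh2, hg1h1g2, hg1g2h2.cyclic_left⟩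
  obtain ⟨j, hj⟩ := h.exists_derived_not_weaklySeparated (hc1 ▸ hk) (hc2 ▸ hk)
  have hne {I : Finset (Fin n)} (hI : #I = k) : I.Nonempty := by
    rw [← card_pos, hI]
    omega
  exact ⟨j, by rw [card_derived (hne hc1), hc1], by rw [card_derived (hne hc2), hc2],
    notMem_derived, notMem_derived, hj⟩
end

section
/- Under the projection π: R^8 → R^4, (x_1,...,x_8) ↦ (x_1+x_2, x_3+x_4, x_5+x_6, x_7+x_8), the hypersimplex Δ_{4,8} maps onto the second dilate of the octahedron {y ∈ [0,2]^4 : Σ y_i = 4}, and the four regions of Δ_{4,8} defined by the cyclic inequality systems {x_{12} ≥ 1, x_{1234} ≥ 2, x_{123456} ≥ 3} and its three cyclic block rotations map onto the four regions {y_1 ≥ 1, y_1+y_2 ≥ 2, y_1+y_2+y_3 ≥ 3} and its cyclic rotations. -/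
/-- The projection `(x_1,…,x_8) ↦ (x_1+x_2, x_3+x_4, x_5+x_6, x_7+x_8)`. -/
def proj : (Fin 8 → ℝ) → (Fin 4 → ℝ) :=
  fun x i => x ⟨2 * i.val, by have := i.isLt; omega⟩ +
    x ⟨2 * i.val + 1, by have := i.isLt; omega⟩

open Fin.NatCast

/-!
Halving each block, `y ↦ (y₁/2, y₁/2, …, y₄/2)`, is a section of `proj` carrying the octahedron
into `Δ_{4,8}`, so `proj` maps `Δ_{4,8}` onto the octahedron. The region inequalities involve `x`
only through `proj x`, so each region is `Δ_{4,8}` cut by a preimage and its image is the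
octahedron cut by the same inequalities.
-/

lemma sum_proj (x : Fin 8 → ℝ) : ∑ i, proj x i = ∑ m, x m := by
  rw [Fin.sum_univ_eight, Fin.sum_univ_four]
  simp only [proj, add_assoc]
  rfl

noncomputable def splitBlocks (y : Fin 4 → ℝ) : Fin 8 → ℝ :=
  fun m => y ⟨m.val / 2, by omega⟩ / 2

lemma proj_splitBlocks (y : Fin 4 → ℝ) : proj (splitBlocks y) = y := by
  funext i
  have h₀ : 2 * i.val / 2 = i.val := by omega
  have h₁ : (2 * i.val + 1) / 2 = i.val := by omega
  simp only [proj, splitBlocks, h₀, h₁, Fin.eta]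
  ring

lemma proj_image_hypersimplex :
    proj '' {x | (∀ m, 0 ≤ x m ∧ x m ≤ 1) ∧ ∑ m, x m = 4} =
      {y | (∀ i, 0 ≤ y i ∧ y i ≤ 2) ∧ ∑ i, y i = 4} := by
  apply Set.Subset.antisymm
  · rintro _ ⟨x, ⟨hx, hsum⟩, rfl⟩
    refine ⟨fun i => ?_, by rw [sum_proj, hsum]⟩
    have h₀ := hx ⟨2 * i.val, by omega⟩
    have h₁ := hx ⟨2 * i.val + 1, by omega⟩
    constructor <;> simp only [proj] <;> linarith [h₀.1, h₀.2, h₁.1, h₁.2]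
  · rintro y ⟨hy, hsum⟩
    refine ⟨splitBlocks y, ⟨fun m => ?_, ?_⟩, proj_splitBlocks y⟩
    · have := hy ⟨m.val / 2, by omega⟩
      constructor <;> simp only [splitBlocks] <;> linarith [this.1, this.2]
    · rw [← sum_proj, proj_splitBlocks, hsum]

theorem stmt19 :
    let Δ : Set (Fin 8 → ℝ) := {x | (∀ m, 0 ≤ x m ∧ x m ≤ 1) ∧ ∑ m, x m = 4}
    let Oct : Set (Fin 4 → ℝ) := {y | (∀ i, 0 ≤ y i ∧ y i ≤ 2) ∧ ∑ i, y i = 4}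
    (proj '' Δ = Oct) ∧
    ∀ c : Fin 4,
      proj '' {x ∈ Δ | ∀ m : Fin 3,
          ((m : ℕ) + 1 : ℝ) ≤ ∑ t ∈ Finset.range ((m : ℕ) + 1), proj x (c + (t : Fin 4))}
        = {y ∈ Oct | ∀ m : Fin 3,
          ((m : ℕ) + 1 : ℝ) ≤ ∑ t ∈ Finset.range ((m : ℕ) + 1), y (c + (t : Fin 4))} := by
  intro Δ Oct
  have hΔ : proj '' Δ = Oct := proj_image_hypersimplex
  refine ⟨hΔ, fun c => ?_⟩
  rw [← hΔ]
  exact Set.image_inter_preimage proj Δ {y | ∀ m : Fin 3,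
    ((m : ℕ) + 1 : ℝ) ≤ ∑ t ∈ Finset.range ((m : ℕ) + 1), y (c + (t : Fin 4))}
end
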